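/- arXiv:2305.04104 — 7 statements merged into one kernel-verified Lean document; each statement's English description precedes it below -/
import Mathlib

section
/- For every fixed θ ∈ ℝ, the map p ↦ 𝒱_nav(p,θ) is differentiable at every point p ∈ ℝ² with ‖p − p_o‖ > r_o, and its gradient there equals ∇V_nav(p) + (I₂ − R(θ))ᵀ(p_d − p_o), where ∇V_nav(p) = p − p_d + ϱ·φ'(d_o(p))·(p − p_o)/‖p − p_o‖. -/
open Real Filter
open scoped RealInnerProductSpace Topology Matrix

noncomputable section

/-- The Euclidean plane. -/
abbrev E2 : Type := EuclideanSpace ℝ (Fin 2)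

/-- The planar rotation matrix `R(θ)`. -/
def RotM (θ : ℝ) : Matrix (Fin 2) (Fin 2) ℝ :=
  !![Real.cos θ, -Real.sin θ; Real.sin θ, Real.cos θ]

/-- The matrix `Δ = [[0,-1],[1,0]]`. -/
def DeltaM : Matrix (Fin 2) (Fin 2) ℝ := !![0, -1; 1, 0]

/-- Reinterpret a plain vector as a point of the Euclidean plane. -/
def toE2 (v : Fin 2 → ℝ) : E2 := (WithLp.equiv 2 (Fin 2 → ℝ)).symm v

/-- Reinterpret a point of the Euclidean plane as a plain vector. -/
def fromE2 (p : E2) : Fin 2 → ℝ := WithLp.equiv 2 (Fin 2 → ℝ) p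

/-- A `2×2` matrix acting on a point of the Euclidean plane. -/
def mulV (M : Matrix (Fin 2) (Fin 2) ℝ) (p : E2) : E2 := toE2 (M.mulVec (fromE2 p))

/-- The barrier function `φ`. -/
def phi (rs z : ℝ) : ℝ := if z ≤ rs then (z - rs) ^ 2 * Real.log (rs / z) else 0

/-- The derivative `φ'` of the barrier function. -/
def phi' (rs z : ℝ) : ℝ :=
  if z ≤ rs then 2 * (z - rs) * Real.log (rs / z) - (z - rs) ^ 2 / z else 0

/-- Distance to the obstacle, `d_o(p) = ‖p - p_o‖ - r_o`. -/
def dO (po : E2) (ro : ℝ) (p : E2) : ℝ := ‖p - po‖ - ro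

/-- The free space `X_p = {p : ‖p - p_o‖ ≥ r_o + ε}`. -/
def Xp (po : E2) (ro ε : ℝ) : Set E2 := {p | ro + ε ≤ ‖p - po‖}

/-- The navigation function `V_nav`. -/
def Vnav (po pd : E2) (ro ϱ rs : ℝ) (p : E2) : ℝ :=
  (1 / 2) * ‖p - pd‖ ^ 2 + ϱ * phi rs (dO po ro p)

/-- The gradient `∇V_nav(p) = p - p_d + ϱ φ'(d_o(p)) (p - p_o)/‖p - p_o‖`. -/
def gradVnav (po pd : E2) (ro ϱ rs : ℝ) (p : E2) : E2 :=
  (p - pd) + ((ϱ * phi' rs (dO po ro p)) / ‖p - po‖) • (p - po)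

/-- The transformation `T(p,θ) = p_o + R(θ)(p - p_o)`. -/
def Tmap (po : E2) (p : E2) (θ : ℝ) : E2 := po + mulV (RotM θ) (p - po)

/-- The modified navigation function `𝒱_nav`. -/
def Vnav2 (po pd : E2) (ro ϱ rs γθ : ℝ) (p : E2) (θ : ℝ) : ℝ :=
  (1 / 2) * ‖Tmap po p θ - pd‖ ^ 2 + ϱ * phi rs (dO po ro p) + (γθ / 2) * θ ^ 2

/-- The map `σ(θ) = (I₂ - R(θ))ᵀ (p_o - p_d)`. -/
def sigmaFn (po pd : E2) (θ : ℝ) : E2 := mulV ((1 - RotM θ)ᵀ) (po - pd)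

/-! For fixed `θ`, `T(q,θ) - p_d = R(θ)(q - c)` with `c = p_o + R(θ)ᵀ(p_d - p_o)`, and `R(θ)` is an
isometry, so `𝒱_nav(·,θ)` is `V_nav` with destination `c`, plus a constant. Its gradient at `p` is
therefore `∇V_nav(p) + (p_d - c)`, and `p_d - c = (I₂ - R(θ))ᵀ(p_d - p_o)`. The barrier `φ` is
differentiable on `(0, ∞)`, also at the junction `z = r_s`, where it vanishes to second order. -/

lemma hasFDerivAt_norm {F : Type*} [NormedAddCommGroup F] [InnerProductSpace ℝ F] {x : F}
    (hx : x ≠ 0) : HasFDerivAt (fun y : F => ‖y‖) (‖x‖⁻¹ • innerSL ℝ x) x := by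
  have hsqrt : HasDerivAt Real.sqrt (1 / (2 * √(‖x‖ ^ 2))) (‖x‖ ^ 2) :=
    Real.hasDerivAt_sqrt (by positivity)
  have h := hsqrt.comp_hasFDerivAt x (hasStrictFDerivAt_norm_sq x).hasFDerivAt
  simp only [Function.comp_def, Real.sqrt_sq (norm_nonneg _)] at h
  refine h.congr_fderiv ?_
  ext y
  simp only [one_div, mul_inv_rev, two_smul, smul_add, add_apply, smul_apply,
    innerSL_apply_apply, smul_eq_mul]
  field_simp
  ring

lemma hasDerivAt_sub_sq_mul {g : ℝ → ℝ} {a : ℝ} (hg : ContinuousAt g a) :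
    HasDerivAt (fun w => (w - a) ^ 2 * g w) 0 a := by
  rw [hasDerivAt_iff_tendsto_slope]
  have hlim : Tendsto (fun w => (w - a) * g w) (𝓝[≠] a) (𝓝 0) := by
    have hcont : ContinuousAt (fun w => (w - a) * g w) a :=
      (continuous_sub_right a).continuousAt.mul hg
    simpa using hcont.tendsto.mono_left nhdsWithin_le_nhds
  refine hlim.congr' ?_
  filter_upwards [self_mem_nhdsWithin] with w hw
  rw [slope_def_field]
  field_simp [sub_ne_zero.mpr hw]
  ring

lemma hasDerivAt_sub_sq_mul_log_div {rs z : ℝ} (hrs : rs ≠ 0) (hz : z ≠ 0) :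
    HasDerivAt (fun w => (w - rs) ^ 2 * Real.log (rs / w))
      (2 * (z - rs) * Real.log (rs / z) - (z - rs) ^ 2 / z) z := by
  have hlog : HasDerivAt (fun w => Real.log (rs / w)) (-(1 / z)) z := by
    have h := ((hasDerivAt_inv hz).const_mul rs).log (mul_ne_zero hrs (inv_ne_zero hz))
    simp only [← div_eq_mul_inv] at h
    convert h using 1
    field_simp
  have hsq : HasDerivAt (fun w => (w - rs) ^ 2) (2 * (z - rs)) z := by
    simpa using ((hasDerivAt_id' z).sub_const rs).fun_pow 2
  exact (hsq.fun_mul hlog).congr_deriv (by ring)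

lemma phi_eq_sub_sq_mul_max_log {rs w : ℝ} (hrs : 0 ≤ rs) (hw : 0 < w) :
    phi rs w = (w - rs) ^ 2 * max (Real.log (rs / w)) 0 := by
  by_cases hwrs : w ≤ rs
  · rw [phi, if_pos hwrs, max_eq_left (Real.log_nonneg ((one_le_div hw).mpr hwrs))]
  · rw [phi, if_neg hwrs, max_eq_right (Real.log_nonpos (div_nonneg hrs hw.le)
      ((div_le_one hw).mpr (le_of_not_ge hwrs))), mul_zero]

theorem hasDerivAt_phi {rs z : ℝ} (hz : 0 < z) : HasDerivAt (phi rs) (phi' rs z) z := by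
  rcases lt_trichotomy z rs with hlt | rfl | hgt
  · rw [phi', if_pos hlt.le]
    refine (hasDerivAt_sub_sq_mul_log_div (hz.trans hlt).ne' hz.ne').congr_of_eventuallyEq ?_
    filter_upwards [eventually_lt_nhds hlt] with w hw
    rw [phi, if_pos hw.le]
  · -- at the junction `φ` is `(w - r_s)²` times a function continuous at `r_s`
    have hmax : ContinuousAt (fun w => max (Real.log (z / w)) 0) z :=
      ((continuousAt_const.div continuousAt_id hz.ne').log (div_ne_zero hz.ne' hz.ne')).max
        continuousAt_const
    rw [show phi' z z = 0 by simp [phi']]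
    refine (hasDerivAt_sub_sq_mul hmax).congr_of_eventuallyEq ?_
    filter_upwards [eventually_gt_nhds hz] with w hw
    exact phi_eq_sub_sq_mul_max_log hz.le hw
  · rw [phi', if_neg hgt.not_ge]
    refine (hasDerivAt_const z 0).congr_of_eventuallyEq ?_
    filter_upwards [eventually_gt_nhds hgt] with w hw
    rw [phi, if_neg hw.not_ge]

lemma mulV_eq_toEuclideanLin (M : Matrix (Fin 2) (Fin 2) ℝ) (v : E2) :
    mulV M v = Matrix.toEuclideanLin M v := rfl

lemma mulV_sub (M : Matrix (Fin 2) (Fin 2) ℝ) (a b : E2) :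
    mulV M (a - b) = mulV M a - mulV M b := by
  simp only [mulV_eq_toEuclideanLin, map_sub]

lemma sub_mulV (M N : Matrix (Fin 2) (Fin 2) ℝ) (v : E2) :
    mulV (M - N) v = mulV M v - mulV N v := by
  simp only [mulV_eq_toEuclideanLin, map_sub, LinearMap.sub_apply]

lemma one_mulV (v : E2) : mulV 1 v = v := by
  simp [mulV, toE2, fromE2]

lemma mulV_mulV (M N : Matrix (Fin 2) (Fin 2) ℝ) (v : E2) :
    mulV M (mulV N v) = mulV (M * N) v := by
  simp only [mulV, toE2, fromE2, Equiv.apply_symm_apply, Matrix.mulVec_mulVec]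

lemma RotM_mul_transpose (θ : ℝ) : RotM θ * (RotM θ)ᵀ = 1 := by
  ext i j
  fin_cases i <;> fin_cases j <;>
    simp [RotM, Matrix.mul_apply, Fin.sum_univ_two] <;> nlinarith [sin_sq_add_cos_sq θ]

lemma norm_mulV_RotM (θ : ℝ) (v : E2) : ‖mulV (RotM θ) v‖ = ‖v‖ := by
  rw [EuclideanSpace.norm_eq, EuclideanSpace.norm_eq]
  congr 1
  simp only [mulV, toE2, fromE2, RotM, WithLp.equiv_apply, WithLp.equiv_symm_apply,
    Matrix.cons_mulVec, Matrix.empty_mulVec, dotProduct, Fin.sum_univ_two, Fin.isValue,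
    Matrix.cons_val_zero, Matrix.cons_val_one, Matrix.cons_val_fin_one, neg_mul, norm_eq_abs, sq_abs]
  nlinarith [sin_sq_add_cos_sq θ]

lemma Tmap_sub (po pd q : E2) (θ : ℝ) :
    Tmap po q θ - pd = mulV (RotM θ) (q - (po + mulV (RotM θ)ᵀ (pd - po))) := by
  rw [← sub_sub, mulV_sub, mulV_mulV, RotM_mul_transpose, one_mulV, Tmap]
  abel

lemma Vnav2_eq_Vnav (po pd : E2) (ro ϱ rs γθ : ℝ) (q : E2) (θ : ℝ) :
    Vnav2 po pd ro ϱ rs γθ q θ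
      = Vnav po (po + mulV (RotM θ)ᵀ (pd - po)) ro ϱ rs q + γθ / 2 * θ ^ 2 := by
  rw [Vnav2, Vnav, Tmap_sub, norm_mulV_RotM]

lemma gradVnav_eq_add (po pd pd' : E2) (ro ϱ rs : ℝ) (p : E2) :
    gradVnav po pd' ro ϱ rs p = gradVnav po pd ro ϱ rs p + (pd - pd') := by
  simp only [gradVnav]
  abel

theorem hasGradientAt_Vnav {po pd p : E2} {ro : ℝ} (ϱ rs : ℝ) (hro : 0 ≤ ro)
    (hp : ro < ‖p - po‖) : HasGradientAt (Vnav po pd ro ϱ rs) (gradVnav po pd ro ϱ rs p) p := by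
  have hpo : p - po ≠ 0 := norm_pos_iff.mp (hro.trans_lt hp)
  have hdist : HasFDerivAt (dO po ro) (‖p - po‖⁻¹ • innerSL ℝ (p - po)) p :=
    ((hasFDerivAt_comp_sub po).2 (hasFDerivAt_norm hpo)).sub_const ro
  have hsq : HasFDerivAt (fun q : E2 => 1 / 2 * ‖q - pd‖ ^ 2) (innerSL ℝ (p - pd)) p := by
    refine ((((hasFDerivAt_id p).sub_const pd).norm_sq).const_mul (1 / 2 : ℝ)).congr_fderiv ?_
    ext y
    simp only [id_eq, ContinuousLinearMap.comp_id, two_smul, smul_add, add_apply,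
      smul_apply, innerSL_apply_apply, smul_eq_mul]
    ring
  have hbarrier :=
    ((hasDerivAt_phi (rs := rs) (sub_pos.2 hp)).comp_hasFDerivAt p hdist).const_mul ϱ
  rw [hasGradientAt_iff_hasFDerivAt]
  refine (hsq.add hbarrier).congr_fderiv ?_
  ext y
  simp only [gradVnav, dO, add_apply, smul_apply, innerSL_apply_apply, smul_eq_mul,
    InnerProductSpace.toDual_apply_apply, inner_add_left, real_inner_smul_left]
  ring

theorem statement_0_general
    (po pd : E2) (ro ϱ rs γθ : ℝ)
    (hro : 0 < ro)
    (θ : ℝ) (p : E2) (hp : ro < ‖p - po‖) :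
    HasGradientAt (fun q => Vnav2 po pd ro ϱ rs γθ q θ)
      (gradVnav po pd ro ϱ rs p + mulV ((1 - RotM θ)ᵀ) (pd - po)) p := by
  set c := po + mulV (RotM θ)ᵀ (pd - po) with hc
  have hshift : mulV (1 - RotM θ)ᵀ (pd - po) = pd - c := by
    rw [Matrix.transpose_sub, Matrix.transpose_one, sub_mulV, one_mulV, hc]
    abel
  have hVnav := hasGradientAt_iff_hasFDerivAt.mp (hasGradientAt_Vnav (pd := c) ϱ rs hro.le hp)
  rw [hasGradientAt_iff_hasFDerivAt, hshift, ← gradVnav_eq_add]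
  simpa only [Vnav2_eq_Vnav] using hVnav.add_const (γθ / 2 * θ ^ 2)

/-- For every fixed `θ`, the map `p ↦ 𝒱_nav(p,θ)` is differentiable at every
point `p` with `‖p - p_o‖ > r_o`, with gradient `∇V_nav(p) + (I₂ - R(θ))ᵀ(p_d - p_o)`. -/
theorem statement_0
    (po pd : E2) (ro ε ϱ rs γθ : ℝ)
    (hro : 0 < ro) (hε : 0 < ε) (hϱ : 0 < ϱ) (hγθ : 0 < γθ)
    (hpd : pd ∈ Xp po ro ε) (hrs_lb : ε < rs) (hrs_ub : rs < dO po ro pd)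
    (θ : ℝ) (p : E2) (hp : ro < ‖p - po‖) :
    HasGradientAt (fun q => Vnav2 po pd ro ϱ rs γθ q θ)
      (gradVnav po pd ro ϱ rs p + mulV ((1 - RotM θ)ᵀ) (pd - po)) p :=
  statement_0_general po pd ro ϱ rs γθ hro θ p hp
end
end

section
/- For every p ∈ X_p and θ ∈ ℝ, the full gradient of 𝒱_nav vanishes at (p,θ) — that is, the p-gradient ∇_p𝒱_nav(p,θ) = ∇V_nav(p) + (I₂ − R(θ))ᵀ(p_d − p_o) and the θ-derivative ∂_θ𝒱_nav(p,θ) = γ_θ·θ − (p − p_o)ᵀΔR(θ)ᵀ(p_o − p_d) are both zero — if and only if θ = 0 and ∇V_nav(p) = 0, where ∇V_nav(p) = p − p_d + ϱ·φ'(d_o(p))·(p − p_o)/‖p − p_o‖. Hence the critical set of 𝒱_nav equals C_{V_nav} × {0}, where C_{V_nav} is the set of critical points of V_nav. -/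
open Real Filter
open scoped RealInnerProductSpace Topology Matrix

noncomputable section

def planarCross (u v : E2) : ℝ := u 0 * v 1 - u 1 * v 0

theorem planarCross_zero_right (u : E2) : planarCross u 0 = 0 := by
  simp [planarCross]

theorem RotM_zero : RotM 0 = 1 := by
  simp [RotM, Matrix.one_fin_two]

theorem mulV_zero (v : E2) : mulV 0 v = 0 := by
  simp [mulV, toE2]

/-- Taking the cross product with `p - p_o` kills the radial barrier term `c • (p - p_o)`, so at a
zero of the `p`-gradient the `θ`-equation reduces to `γ_θ θ = 0`. -/
theorem inner_DeltaM_RotM_eq_neg_planarCross (p po pd : E2) (c θ : ℝ) :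
    ⟪p - po, mulV DeltaM (mulV ((RotM θ)ᵀ) (po - pd))⟫ =
      -planarCross (p - po) ((p - pd) + c • (p - po) + mulV ((1 - RotM θ)ᵀ) (pd - po)) := by
  simp [planarCross, mulV, toE2, fromE2, RotM, DeltaM, Matrix.one_fin_two,
    Fin.sum_univ_two, PiLp.inner_apply]
  ring

theorem gradient_eq_zero_and_theta_deriv_eq_zero_iff (p po pd : E2) (c γθ θ : ℝ)
    (hγθ : 0 < γθ) :
    ((p - pd) + c • (p - po) + mulV ((1 - RotM θ)ᵀ) (pd - po) = 0 ∧
      γθ * θ - ⟪p - po, mulV DeltaM (mulV ((RotM θ)ᵀ) (po - pd))⟫ = 0)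
    ↔ (θ = 0 ∧ (p - pd) + c • (p - po) = 0) := by
  rw [inner_DeltaM_RotM_eq_neg_planarCross p po pd c θ]
  constructor
  · rintro ⟨hgrad, hθ⟩
    rw [hgrad, planarCross_zero_right, neg_zero, sub_zero, mul_eq_zero] at hθ
    have hθ : θ = 0 := hθ.resolve_left hγθ.ne'
    subst hθ
    simpa [RotM_zero, mulV_zero] using hgrad
  · rintro ⟨rfl, hgrad⟩
    simp [RotM_zero, mulV_zero, hgrad, planarCross_zero_right]

theorem statement_2_general
    (po pd : E2) (ro ε ϱ rs γθ : ℝ)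
    (hγθ : 0 < γθ) :
    (∀ p ∈ Xp po ro ε, ∀ θ : ℝ,
      (gradVnav po pd ro ϱ rs p + mulV ((1 - RotM θ)ᵀ) (pd - po) = 0 ∧
        γθ * θ - ⟪p - po, mulV DeltaM (mulV ((RotM θ)ᵀ) (po - pd))⟫ = 0)
      ↔ (θ = 0 ∧ gradVnav po pd ro ϱ rs p = 0)) ∧
    {q : E2 × ℝ | q.1 ∈ Xp po ro ε ∧
        gradVnav po pd ro ϱ rs q.1 + mulV ((1 - RotM q.2)ᵀ) (pd - po) = 0 ∧
        γθ * q.2 - ⟪q.1 - po, mulV DeltaM (mulV ((RotM q.2)ᵀ) (po - pd))⟫ = 0}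
      = {p : E2 | p ∈ Xp po ro ε ∧ gradVnav po pd ro ϱ rs p = 0} ×ˢ {(0 : ℝ)} := by
  have key : ∀ (p : E2) (θ : ℝ),
      (gradVnav po pd ro ϱ rs p + mulV ((1 - RotM θ)ᵀ) (pd - po) = 0 ∧
        γθ * θ - ⟪p - po, mulV DeltaM (mulV ((RotM θ)ᵀ) (po - pd))⟫ = 0)
      ↔ (θ = 0 ∧ gradVnav po pd ro ϱ rs p = 0) := fun p θ =>
    gradient_eq_zero_and_theta_deriv_eq_zero_iff p po pd _ γθ θ hγθ
  refine ⟨fun p _ θ => key p θ, ?_⟩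
  ext ⟨p, θ⟩
  simp only [Set.mem_ofPred_eq, Set.mem_prod, Set.mem_singleton_iff, key]
  tauto

/-- For every `p ∈ X_p` and `θ ∈ ℝ`, the full gradient of `𝒱_nav` vanishes at
`(p,θ)` — both the `p`-gradient `∇V_nav(p) + (I₂ - R(θ))ᵀ(p_d - p_o)` and the `θ`-derivative
`γ_θ θ - ⟨p - p_o, Δ(R(θ)ᵀ(p_o - p_d))⟩` are zero — iff `θ = 0` and `∇V_nav(p) = 0`.
Hence the critical set of `𝒱_nav` equals `C_{V_nav} × {0}`. -/
theorem statement_2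
    (po pd : E2) (ro ε ϱ rs γθ : ℝ)
    (hro : 0 < ro) (hε : 0 < ε) (hϱ : 0 < ϱ) (hγθ : 0 < γθ)
    (hpd : pd ∈ Xp po ro ε) (hrs_lb : ε < rs) (hrs_ub : rs < dO po ro pd) :
    (∀ p ∈ Xp po ro ε, ∀ θ : ℝ,
      (gradVnav po pd ro ϱ rs p + mulV ((1 - RotM θ)ᵀ) (pd - po) = 0 ∧
        γθ * θ - ⟪p - po, mulV DeltaM (mulV ((RotM θ)ᵀ) (po - pd))⟫ = 0)
      ↔ (θ = 0 ∧ gradVnav po pd ro ϱ rs p = 0)) ∧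
    {q : E2 × ℝ | q.1 ∈ Xp po ro ε ∧
        gradVnav po pd ro ϱ rs q.1 + mulV ((1 - RotM q.2)ᵀ) (pd - po) = 0 ∧
        γθ * q.2 - ⟪q.1 - po, mulV DeltaM (mulV ((RotM q.2)ᵀ) (po - pd))⟫ = 0}
      = {p : E2 | p ∈ Xp po ro ε ∧ gradVnav po pd ro ϱ rs p = 0} ×ˢ {(0 : ℝ)} :=
  statement_2_general po pd ro ε ϱ rs γθ hγθ
end
end

section
/- Let Θ ⊂ ℝ be a finite nonempty set with 0 < |θ̄| < π for every θ̄ ∈ Θ, and let θ̄_M = max_{θ̄∈Θ} |θ̄|. Assume 0 < γ_θ < 4·r_o·‖p_d − p_o‖/π². Then for every p ∈ X_p with p ≠ p_d that is a critical point of V_nav (i.e. p − p_d + ϱ·φ'(d_o(p))·(p − p_o)/‖p − p_o‖ = 0), one has 𝒱_nav(p,0) − min_{θ̄∈Θ} 𝒱_nav(p,θ̄) > (2·r_o·‖p_d − p_o‖/π² − γ_θ/2)·θ̄_M², i.e. 𝒱_nav is a synergistic navigation function relative to (p_d,0) with gap exceeding δ*_𝒱 = (2·r_o·‖p_d − p_o‖/π²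 − γ_θ/2)·θ̄_M². -/
open Real Filter
open scoped RealInnerProductSpace Topology Matrix

noncomputable section

/-!
At a critical point `p ≠ p_d` the gradient condition makes `p - p_d` a positive multiple of
`p - p_o` (since `φ' ≤ 0`), and because `p` lies in the barrier region `d_o(p) ≤ r_s < d_o(p_d)`
it is closer to `p_o` than `p_d` is; hence `p_d - p_o = μ (p - p_o)` with `μ < -1`, i.e. `p` sits
behind the obstacle, diametrically opposite to `p_d`. Rotating `p` about `p_o` by `θ` then lowers
the attractive term by `(1 - cos θ) ‖p_d - p_o‖ ‖p - p_o‖`, and the bound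
`1 - cos θ ≥ 2 θ² / π²` on `|θ| ≤ π` together with `‖p - p_o‖ > r_o` gives the gap.
-/

lemma phi'_nonpos (rs : ℝ) {z : ℝ} (hz : 0 < z) : phi' rs z ≤ 0 := by
  unfold phi'
  split_ifs with hzrs
  · have hlog : 0 ≤ log (rs / z) := log_nonneg ((one_le_div hz).2 hzrs)
    have hquot : 0 ≤ (z - rs) ^ 2 / z := by positivity
    nlinarith
  · exact le_rfl

lemma lt_neg_one_of_norm_lt_norm_smul {V : Type*} [NormedAddCommGroup V] [NormedSpace ℝ V]
    {x : V} {μ : ℝ} (hμ : μ < 1) (h : ‖x‖ < ‖μ • x‖) : μ < -1 := by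
  rw [norm_smul, Real.norm_eq_abs] at h
  have hμabs : 1 < |μ| := by
    by_contra! hle
    nlinarith [norm_nonneg x]
  cases abs_cases μ <;> linarith

lemma inner_mulV_rotM_self (θ : ℝ) (x : E2) : ⟪mulV (RotM θ) x, x⟫ = cos θ * ‖x‖ ^ 2 := by
  simp [PiLp.inner_apply, Fin.sum_univ_two, mulV, toE2, fromE2, RotM, dotProduct,
    EuclideanSpace.norm_sq_eq]
  ring

lemma norm_mulV_rotM (θ : ℝ) (x : E2) : ‖mulV (RotM θ) x‖ = ‖x‖ := by
  have hsq : ‖mulV (RotM θ) x‖ ^ 2 = ‖x‖ ^ 2 := by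
    simp [mulV, toE2, fromE2, RotM, dotProduct, EuclideanSpace.norm_sq_eq]
    nlinarith [sin_sq_add_cos_sq θ]
  exact (pow_left_inj₀ (norm_nonneg _) (norm_nonneg _) two_ne_zero).1 hsq

lemma norm_Tmap_sub_sq_of_sub_eq_smul {po p pd : E2} {μ : ℝ} (h : pd - po = μ • (p - po))
    (θ : ℝ) : ‖Tmap po p θ - pd‖ ^ 2 = (1 - 2 * μ * cos θ + μ ^ 2) * ‖p - po‖ ^ 2 := by
  have hT : Tmap po p θ - pd = mulV (RotM θ) (p - po) - (pd - po) := by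
    unfold Tmap; abel
  rw [hT, norm_sub_sq_real, norm_mulV_rotM, h, real_inner_smul_right, inner_mulV_rotM_self,
    norm_smul, mul_pow, Real.norm_eq_abs, sq_abs]
  ring

lemma Vnav2_zero_sub_Vnav2_of_sub_eq_smul {po p pd : E2} {μ : ℝ} (h : pd - po = μ • (p - po))
    (ro ϱ rs γθ θ : ℝ) :
    Vnav2 po pd ro ϱ rs γθ p 0 - Vnav2 po pd ro ϱ rs γθ p θ
      = -μ * (1 - cos θ) * ‖p - po‖ ^ 2 - γθ / 2 * θ ^ 2 := by
  unfold Vnav2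
  rw [norm_Tmap_sub_sq_of_sub_eq_smul h, norm_Tmap_sub_sq_of_sub_eq_smul h, cos_zero]
  ring

section CriticalPoint

variable {po pd p : E2} {ro ε ϱ rs : ℝ}

lemma dO_pos_of_mem_Xp (hε : 0 < ε) (hp : p ∈ Xp po ro ε) : 0 < dO po ro p := by
  have hp' : ro + ε ≤ ‖p - po‖ := hp
  unfold dO; linarith

lemma dO_le_and_exists_sub_eq_smul_of_critical (hε : 0 < ε) (hϱ : 0 < ϱ) (hp : p ∈ Xp po ro ε)
    (hppd : p ≠ pd)
    (hcrit : p - pd + ((ϱ * phi' rs (dO po ro p)) / ‖p - po‖) • (p - po) = 0) :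
    dO po ro p ≤ rs ∧ ∃ μ < (1 : ℝ), pd - po = μ • (p - po) := by
  set c := (ϱ * phi' rs (dO po ro p)) / ‖p - po‖ with hc
  have hc_nonpos : c ≤ 0 :=
    div_nonpos_of_nonpos_of_nonneg
      (mul_nonpos_of_nonneg_of_nonpos hϱ.le (phi'_nonpos rs (dO_pos_of_mem_Xp hε hp)))
      (norm_nonneg _)
  have hpd_sub : pd - po = (1 + c) • (p - po) := by
    linear_combination (norm := module) -hcrit
  have hc_ne : c ≠ 0 := by
    rintro hc0
    rw [hc0, zero_smul, add_zero, sub_eq_zero] at hcrit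
    exact hppd hcrit
  refine ⟨?_, 1 + c, by linarith [lt_of_le_of_ne hc_nonpos hc_ne], hpd_sub⟩
  by_contra! hlt
  exact hc_ne (by rw [hc, phi', if_neg hlt.not_ge, mul_zero, zero_div])

lemma exists_lt_neg_one_sub_eq_smul_of_critical (hε : 0 < ε) (hϱ : 0 < ϱ)
    (hrs_ub : rs < dO po ro pd) (hp : p ∈ Xp po ro ε) (hppd : p ≠ pd)
    (hcrit : p - pd + ((ϱ * phi' rs (dO po ro p)) / ‖p - po‖) • (p - po) = 0) :
    ∃ μ < (-1 : ℝ), pd - po = μ • (p - po) := by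
  obtain ⟨hdO, μ, hμ, hpd_sub⟩ := dO_le_and_exists_sub_eq_smul_of_critical hε hϱ hp hppd hcrit
  have hcloser : ‖p - po‖ < ‖pd - po‖ := by
    unfold dO at hdO hrs_ub; linarith
  rw [hpd_sub] at hcloser
  exact ⟨μ, lt_neg_one_of_norm_lt_norm_smul hμ hcloser, hpd_sub⟩

lemma Vnav2_zero_sub_Vnav2_gt_of_critical (γθ : ℝ) (hε : 0 < ε) (hϱ : 0 < ϱ)
    (hrs_ub : rs < dO po ro pd) (hp : p ∈ Xp po ro ε) (hppd : p ≠ pd)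
    (hcrit : p - pd + ((ϱ * phi' rs (dO po ro p)) / ‖p - po‖) • (p - po) = 0)
    {t : ℝ} (ht₀ : 0 < |t|) (htπ : |t| ≤ π) :
    (2 * ro * ‖pd - po‖ / π ^ 2 - γθ / 2) * t ^ 2
      < Vnav2 po pd ro ϱ rs γθ p 0 - Vnav2 po pd ro ϱ rs γθ p t := by
  obtain ⟨μ, hμ, hpd_sub⟩ :=
    exists_lt_neg_one_sub_eq_smul_of_critical hε hϱ hrs_ub hp hppd hcrit
  have hnorm : ‖pd - po‖ = -μ * ‖p - po‖ := by
    rw [hpd_sub, norm_smul, Real.norm_eq_abs, abs_of_neg (by linarith)]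
  have hfar : ro < ‖p - po‖ := by
    linarith [dO_pos_of_mem_Xp hε hp, show dO po ro p = ‖p - po‖ - ro from rfl]
  have hcos : 2 / π ^ 2 * t ^ 2 ≤ 1 - cos t := by
    linarith [cos_le_one_sub_mul_cos_sq htπ]
  have ht : 0 < 2 / π ^ 2 * t ^ 2 :=
    mul_pos (by positivity) (by simpa only [sq_abs] using pow_pos ht₀ 2)
  have hx : 0 < ‖p - po‖ := by
    refine norm_pos_iff.2 fun hx => hppd ?_
    rw [hx, smul_zero, sub_eq_zero] at hpd_sub
    rw [sub_eq_zero.1 hx, hpd_sub]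
  have hpd_pos : 0 < ‖pd - po‖ := by
    rw [hnorm]; exact mul_pos (by linarith) hx
  rw [Vnav2_zero_sub_Vnav2_of_sub_eq_smul hpd_sub]
  calc (2 * ro * ‖pd - po‖ / π ^ 2 - γθ / 2) * t ^ 2
      = 2 / π ^ 2 * t ^ 2 * ‖pd - po‖ * ro - γθ / 2 * t ^ 2 := by ring
    _ < 2 / π ^ 2 * t ^ 2 * ‖pd - po‖ * ‖p - po‖ - γθ / 2 * t ^ 2 := by
      gcongr
    _ ≤ (1 - cos t) * ‖pd - po‖ * ‖p - po‖ - γθ / 2 * t ^ 2 := by gcongr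
    _ = -μ * (1 - cos t) * ‖p - po‖ ^ 2 - γθ / 2 * t ^ 2 := by rw [hnorm]; ring

end CriticalPoint

theorem statement_3_general
    (po pd : E2) (ro ε ϱ rs γθ : ℝ)
    (hε : 0 < ε) (hϱ : 0 < ϱ)
    (hrs_ub : rs < dO po ro pd)
    (Θ : Finset ℝ) (hne : Θ.Nonempty) (hΘ : ∀ t ∈ Θ, 0 < |t| ∧ |t| < π)
    (p : E2) (hp : p ∈ Xp po ro ε) (hppd : p ≠ pd)
    (hcrit : p - pd + ((ϱ * phi' rs (dO po ro p)) / ‖p - po‖) • (p - po) = 0) :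
    (2 * ro * ‖pd - po‖ / π ^ 2 - γθ / 2) * (Θ.sup' hne fun t => |t|) ^ 2
      < Vnav2 po pd ro ϱ rs γθ p 0 - Θ.inf' hne fun t => Vnav2 po pd ro ϱ rs γθ p t := by
  obtain ⟨t, htΘ, hsup⟩ := Finset.exists_mem_eq_sup' hne fun t => |t|
  obtain ⟨ht₀, htπ⟩ := hΘ t htΘ
  rw [hsup, sq_abs]
  calc (2 * ro * ‖pd - po‖ / π ^ 2 - γθ / 2) * t ^ 2
      < Vnav2 po pd ro ϱ rs γθ p 0 - Vnav2 po pd ro ϱ rs γθ p t :=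
        Vnav2_zero_sub_Vnav2_gt_of_critical γθ hε hϱ hrs_ub hp hppd hcrit ht₀ htπ.le
    _ ≤ _ := sub_le_sub_left (Finset.inf'_le _ htΘ) _

/-- With `Θ` finite nonempty, `0 < |θ̄| < π` on `Θ`, `θ̄_M` the max of `|θ̄|`,
and `0 < γ_θ < 4 r_o ‖p_d - p_o‖ / π²`, every undesired critical point `p ≠ p_d` of `V_nav` in
`X_p` satisfies `𝒱_nav(p,0) - min_{θ̄∈Θ} 𝒱_nav(p,θ̄) > (2 r_o ‖p_d - p_o‖/π² - γ_θ/2) θ̄_M²`. -/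
theorem statement_3
    (po pd : E2) (ro ε ϱ rs γθ : ℝ)
    (hro : 0 < ro) (hε : 0 < ε) (hϱ : 0 < ϱ)
    (hpd : pd ∈ Xp po ro ε) (hrs_lb : ε < rs) (hrs_ub : rs < dO po ro pd)
    (Θ : Finset ℝ) (hne : Θ.Nonempty) (hΘ : ∀ t ∈ Θ, 0 < |t| ∧ |t| < π)
    (hγθ₀ : 0 < γθ) (hγθ : γθ < 4 * ro * ‖pd - po‖ / π ^ 2)
    (p : E2) (hp : p ∈ Xp po ro ε) (hppd : p ≠ pd)
    (hcrit : p - pd + ((ϱ * phi' rs (dO po ro p)) / ‖p - po‖) • (p - po) = 0) :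
    (2 * ro * ‖pd - po‖ / π ^ 2 - γθ / 2) * (Θ.sup' hne fun t => |t|) ^ 2
      < Vnav2 po pd ro ϱ rs γθ p 0 - Θ.inf' hne fun t => Vnav2 po pd ro ϱ rs γθ p t :=
  statement_3_general po pd ro ε ϱ rs γθ hε hϱ hrs_ub Θ hne hΘ p hp hppd hcrit
end
end

section
/- Fix gains k_p, k_θ, k_η, γ_s > 0. For any p ∈ ℝ² with ‖p − p_o‖ > r_o, θ ∈ ℝ and η ∈ ℝ², define g₁ = ∇V_nav(p) + (I₂ − R(θ))ᵀ(p_d − p_o), g₂ = γ_θ·θ − (p − p_o)ᵀΔR(θ)ᵀ(p_o − p_d), η̃ = η − σ(θ), ϖ = −k_θ·g₂, D_tσ = −R(θ)ᵀΔ(p_d − p_o)·ϖ, κ_s = D_tσ − k_η·η̃ − (k_p/γ_s)·g₁, and u = −k_p·∇V_nav(p) + k_p·η, where ∇V_nav(p) = p − p_d + ϱ·φ'(d_o(p))·(p − p_o)/‖p − p_o‖. Then ⟨g₁, u⟩ + g₂·ϖ + γ_s·⟨η̃, κ_s − D_tσ⟩ = −k_p·‖g₁‖² − k_θ·g₂²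 − γ_s·k_η·‖η̃‖². (This is the time derivative of the Lyapunov function V_s(p,η,θ) = 𝒱_nav(p,θ) + (γ_s/2)‖η − σ(θ)‖² along the smooth hybrid closed-loop flow.) -/
open Real Filter
open scoped RealInnerProductSpace Topology Matrix

noncomputable section

/-!
Since `σ(θ) = -(I₂ - R(θ))ᵀ(p_d - p_o)`, the control is `u = -k_p g₁ + k_p η̃`; the term
`-(k_p/γ_s) g₁` in `κ_s` is chosen so that `γ_s ⟨η̃, κ_s - D_tσ⟩` cancels the cross term
`k_p ⟨g₁, η̃⟩`, leaving only the three negative squares.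
-/

lemma mulV_neg (M : Matrix (Fin 2) (Fin 2) ℝ) (v : E2) : mulV M (-v) = -mulV M v := by
  simp only [mulV, fromE2, toE2, WithLp.equiv_apply, WithLp.equiv_symm_apply, WithLp.ofLp_neg,
    Matrix.mulVec_neg, WithLp.toLp_neg]

lemma sigmaFn_eq_neg (po pd : E2) (θ : ℝ) :
    sigmaFn po pd θ = -mulV ((1 - RotM θ)ᵀ) (pd - po) := by
  rw [sigmaFn, ← mulV_neg, neg_sub]

lemma inner_neg_smul_add_smul_add_mul_inner_eq {F : Type*} [NormedAddCommGroup F]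
    [InnerProductSpace ℝ F] (g e : F) (k kη γ : ℝ) (hγ : γ ≠ 0) :
    ⟪g, -(k • g) + k • e⟫ + γ * ⟪e, -(kη • e) - (k / γ) • g⟫
      = -(k * ‖g‖ ^ 2) - γ * kη * ‖e‖ ^ 2 := by
  simp only [inner_add_right, inner_sub_right, inner_neg_right, inner_smul_right,
    real_inner_self_eq_norm_sq, real_inner_comm e g]
  field_simp
  ring

theorem statement_6_general
    (po pd : E2) (ro ϱ rs : ℝ) (kp kθ kη γs : ℝ)
    (hγs : 0 < γs)
    (p : E2) (θ : ℝ) (η : E2)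
    (g₁ : E2) (hg₁ : g₁ = gradVnav po pd ro ϱ rs p + mulV ((1 - RotM θ)ᵀ) (pd - po))
    (g₂ : ℝ)
    (ηt : E2) (hηt : ηt = η - sigmaFn po pd θ)
    (ϖ : ℝ) (hϖ : ϖ = -(kθ * g₂))
    (Dtσ : E2)
    (κs : E2) (hκs : κs = Dtσ - kη • ηt - (kp / γs) • g₁)
    (u : E2) (hu : u = -(kp • gradVnav po pd ro ϱ rs p) + kp • η) :
    ⟪g₁, u⟫ + g₂ * ϖ + γs * ⟪ηt, κs - Dtσ⟫
      = -(kp * ‖g₁‖ ^ 2) - kθ * g₂ ^ 2 - γs * kη * ‖ηt‖ ^ 2 := by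
  have hu' : u = -(kp • g₁) + kp • ηt := by
    rw [hu, hηt, sigmaFn_eq_neg, hg₁]
    module
  have hκ : κs - Dtσ = -(kη • ηt) - (kp / γs) • g₁ := by
    rw [hκs]
    abel
  rw [hu', hκ, hϖ]
  linear_combination inner_neg_smul_add_smul_add_mul_inner_eq g₁ ηt kp kη γs hγs.ne'

/-- The time derivative of `V_s(p,η,θ) = 𝒱_nav(p,θ) + (γ_s/2)‖η - σ(θ)‖²`
along the smooth hybrid closed-loop flow:
`⟨g₁, u⟩ + g₂ ϖ + γ_s ⟨η̃, κ_s - D_tσ⟩ = -k_p ‖g₁‖² - k_θ g₂² - γ_s k_η ‖η̃‖²`. -/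
theorem statement_6
    (po pd : E2) (ro ϱ rs γθ : ℝ) (kp kθ kη γs : ℝ)
    (hro : 0 < ro) (hϱ : 0 < ϱ) (hrs : 0 < rs) (hγθ : 0 < γθ)
    (hkp : 0 < kp) (hkθ : 0 < kθ) (hkη : 0 < kη) (hγs : 0 < γs)
    (p : E2) (hp : ro < ‖p - po‖) (θ : ℝ) (η : E2)
    (g₁ : E2) (hg₁ : g₁ = gradVnav po pd ro ϱ rs p + mulV ((1 - RotM θ)ᵀ) (pd - po))
    (g₂ : ℝ) (hg₂ : g₂ = γθ * θ - ⟪p - po, mulV DeltaM (mulV ((RotM θ)ᵀ) (po - pd))⟫)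
    (ηt : E2) (hηt : ηt = η - sigmaFn po pd θ)
    (ϖ : ℝ) (hϖ : ϖ = -(kθ * g₂))
    (Dtσ : E2) (hDtσ : Dtσ = ϖ • (-(mulV ((RotM θ)ᵀ) (mulV DeltaM (pd - po)))))
    (κs : E2) (hκs : κs = Dtσ - kη • ηt - (kp / γs) • g₁)
    (u : E2) (hu : u = -(kp • gradVnav po pd ro ϱ rs p) + kp • η) :
    ⟪g₁, u⟫ + g₂ * ϖ + γs * ⟪ηt, κs - Dtσ⟫
      = -(kp * ‖g₁‖ ^ 2) - kθ * g₂ ^ 2 - γs * kη * ‖ηt‖ ^ 2 :=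
  statement_6_general po pd ro ϱ rs kp kθ kη γs hγs p θ η g₁ hg₁ g₂ ηt hηt ϖ hϖ Dtσ κs hκs u hu
end
end

section
/- Let Θ ⊂ ℝ be a finite nonempty set with 0 < |θ̄| < π for every θ̄ ∈ Θ, θ̄_M = max_{θ̄∈Θ} |θ̄|, and assume 0 < γ_θ < 4·r_o·‖p_d − p_o‖/π². Set δ* = (2·r_o·‖p_d − p_o‖/π² − γ_θ/2)·θ̄_M², c_κ = (1 − cos θ̄_M)·‖p_d − p_o‖², and let 0 < γ_s < δ*/c_κ. Define σ(θ) = (I₂ − R(θ))ᵀ(p_o − p_d) and V_s(p,η,θ) = 𝒱_nav(p,θ) + (γ_s/2)‖η − σ(θ)‖². Then for every p ∈ X_p with p ≠ p_d that is a critical point of V_nav (i.e. p − p_d + ϱ·φ'(d_o(p))·(p − p_o)/‖p − p_o‖ = 0), one has V_s(p,0,0) − min_{θ̄∈Θ} V_s(p,0,θ̄) > δ* − γ_s·c_κ > 0. -/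
open Real Filter
open scoped RealInnerProductSpace Topology Matrix

noncomputable section

/-!
At a critical point `p ≠ p_d` of `V_nav` the barrier gradient must cancel `p - p_d`, which forces
`d_o(p) < r_s` and a negative multiple of `p - p_o`: hence `p_d - p_o = μ (p - p_o)` with `μ < 0`,
i.e. `p_o` lies between `p` and `p_d`. For such `p`, rotating about `p_o` by `θ` gains
`‖T(p,0) - p_d‖² - ‖T(p,θ) - p_d‖² = 2 (1 - cos θ) ‖p_d - p_o‖ ‖p - p_o‖`, while
`‖σ(θ)‖² = 2 (1 - cos θ) ‖p_d - p_o‖²`. At the angle of `Θ` of largest modulus, Jordan's inequality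
`1 - cos θ ≥ 2 θ² / π²` and `‖p - p_o‖ > r_o` bound the gain from below by `δ* - γ_s c_κ`.
-/

namespace E2

lemma norm_sq_eq (x : E2) : ‖x‖ ^ 2 = x 0 ^ 2 + x 1 ^ 2 := by
  rw [EuclideanSpace.norm_eq, Real.sq_sqrt (by positivity)]
  simp [Fin.sum_univ_two, sq_abs]

end E2

lemma mulV_apply (M : Matrix (Fin 2) (Fin 2) ℝ) (x : E2) (i : Fin 2) :
    mulV M x i = M i 0 * x 0 + M i 1 * x 1 := by
  fin_cases i <;> simp [mulV, toE2, fromE2]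

lemma norm_mulV_rotM_sub_smul_sq (θ c : ℝ) (v : E2) :
    ‖mulV (RotM θ) v - c • v‖ ^ 2 = (1 - 2 * c * cos θ + c ^ 2) * ‖v‖ ^ 2 := by
  simp only [E2.norm_sq_eq, PiLp.sub_apply, PiLp.smul_apply, smul_eq_mul, mulV_apply, RotM,
    Matrix.of_apply, Matrix.cons_val', Matrix.cons_val_zero, Matrix.cons_val_one,
    Matrix.empty_val', Matrix.cons_val_fin_one]
  linear_combination (v 0 ^ 2 + v 1 ^ 2) * sin_sq_add_cos_sq θ

lemma norm_sigmaFn_sq (po pd : E2) (θ : ℝ) :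
    ‖sigmaFn po pd θ‖ ^ 2 = 2 * (1 - cos θ) * ‖pd - po‖ ^ 2 := by
  have hT : (1 - RotM θ)ᵀ = !![1 - cos θ, -sin θ; sin θ, 1 - cos θ] := by
    ext i j
    fin_cases i <;> fin_cases j <;> simp [RotM, Matrix.one_fin_two]
  rw [sigmaFn, hT, ← norm_neg (pd - po), neg_sub]
  simp only [E2.norm_sq_eq, mulV_apply, Matrix.of_apply, Matrix.cons_val', Matrix.cons_val_zero,
    Matrix.cons_val_one, Matrix.empty_val', Matrix.cons_val_fin_one]
  linear_combination ((po - pd) 0 ^ 2 + (po - pd) 1 ^ 2) * sin_sq_add_cos_sq θ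

lemma norm_tmap_sub_sq_of_sub_eq_smul {po pd p : E2} {c : ℝ} (h : pd - po = c • (p - po))
    (θ : ℝ) : ‖Tmap po p θ - pd‖ ^ 2 = (1 - 2 * c * cos θ + c ^ 2) * ‖p - po‖ ^ 2 := by
  rw [← norm_mulV_rotM_sub_smul_sq, ← h, Tmap]
  congr 2
  abel

lemma phi'_neg {rs z : ℝ} (hz : 0 < z) (hzrs : z < rs) : phi' rs z < 0 := by
  have hlog : 0 < log (rs / z) := log_pos ((one_lt_div hz).mpr hzrs)
  rw [phi', if_pos hzrs.le]
  have hlin : 2 * (z - rs) * log (rs / z) < 0 := by nlinarith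
  linarith [div_pos (sq_pos_of_neg (sub_neg.mpr hzrs)) hz]

lemma phi'_of_le {rs z : ℝ} (h : rs ≤ z) : phi' rs z = 0 := by
  rcases h.lt_or_eq with h | rfl
  · exact if_neg (not_le.mpr h)
  · simp [phi']

lemma exists_neg_smul_of_gradVnav_eq_zero {po pd p : E2} {ro ϱ rs : ℝ} (hϱ : 0 < ϱ)
    (hrs : rs < dO po ro pd) (hp : 0 < dO po ro p) (hppd : p ≠ pd)
    (hcrit : gradVnav po pd ro ϱ rs p = 0) : ∃ c : ℝ, c < 0 ∧ pd - po = c • (p - po) := by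
  set lam := ϱ * phi' rs (dO po ro p) / ‖p - po‖
  have hpd : pd - po = (1 + lam) • (p - po) := by
    rw [gradVnav, add_eq_zero_iff_eq_neg] at hcrit
    rw [add_smul, one_smul, ← sub_neg_eq_add, ← hcrit]
    abel
  have hn : 0 < ‖p - po‖ := by
    refine norm_pos_iff.mpr fun h0 => hppd ?_
    rwa [gradVnav, h0, smul_zero, add_zero, sub_eq_zero] at hcrit
  have hp_rs : dO po ro p < rs := by
    by_contra! h
    refine hppd (sub_eq_zero.mp ?_)
    simpa [gradVnav, phi'_of_le h] using hcrit
  have hlam : lam < 0 := div_neg_of_neg_of_pos (mul_neg_of_pos_of_neg hϱ (phi'_neg hp hp_rs)) hn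
  refine ⟨1 + lam, ?_, hpd⟩
  have hnorm : ‖pd - po‖ = |1 + lam| * ‖p - po‖ := by rw [hpd, norm_smul, Real.norm_eq_abs]
  -- `‖p_d - p_o‖ > r_o + r_s > ‖p - p_o‖` forces `|1 + lam| > 1`, while `1 + lam < 1`.
  unfold dO at hrs hp_rs
  by_contra! h
  rw [abs_of_nonneg h] at hnorm
  nlinarith

lemma norm_sub_eq_neg_mul_norm {po pd p : E2} {μ : ℝ} (hμ : μ ≤ 0)
    (h : pd - po = μ • (p - po)) : ‖pd - po‖ = -μ * ‖p - po‖ := by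
  rw [h, norm_smul, Real.norm_eq_abs, abs_of_nonpos hμ]

lemma one_sub_cos_pos_of_abs_le_pi {θ : ℝ} (hθ : θ ≠ 0) (hθπ : |θ| ≤ π) : 0 < 1 - cos θ := by
  have := cos_le_one_sub_mul_cos_sq hθπ
  have : 0 < 2 / π ^ 2 * θ ^ 2 := by positivity
  linarith

def Vs (po pd : E2) (ro ϱ rs γθ γs : ℝ) (p η : E2) (θ : ℝ) : ℝ :=
  Vnav2 po pd ro ϱ rs γθ p θ + (γs / 2) * ‖η - sigmaFn po pd θ‖ ^ 2

section Vs

variable {po pd p : E2} {ro ϱ rs γθ γs μ : ℝ}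

lemma Vs_zero_sub_Vs_of_sub_eq_smul (hμ : μ ≤ 0) (h : pd - po = μ • (p - po)) (θ : ℝ) :
    Vs po pd ro ϱ rs γθ γs p 0 0 - Vs po pd ro ϱ rs γθ γs p 0 θ =
      (1 - cos θ) * ‖pd - po‖ * ‖p - po‖ - γθ / 2 * θ ^ 2
        - γs * ((1 - cos θ) * ‖pd - po‖ ^ 2) := by
  simp only [Vs, Vnav2, zero_sub, norm_neg, norm_sigmaFn_sq, norm_tmap_sub_sq_of_sub_eq_smul h,
    norm_sub_eq_neg_mul_norm hμ h, cos_zero]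
  ring

lemma lt_Vs_zero_sub_Vs_of_sub_eq_smul (hn : ro < ‖p - po‖) (hμ : μ ≤ 0)
    (h : pd - po = μ • (p - po)) (hw : 0 < ‖pd - po‖) {θ : ℝ} (hθ : θ ≠ 0) (hθπ : |θ| ≤ π) :
    (2 * ro * ‖pd - po‖ / π ^ 2 - γθ / 2) * θ ^ 2 - γs * ((1 - cos θ) * ‖pd - po‖ ^ 2) <
      Vs po pd ro ϱ rs γθ γs p 0 0 - Vs po pd ro ϱ rs γθ γs p 0 θ := by
  rw [Vs_zero_sub_Vs_of_sub_eq_smul hμ h]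
  have hjordan := cos_le_one_sub_mul_cos_sq hθπ
  have key : 2 / π ^ 2 * θ ^ 2 * ro < (1 - cos θ) * ‖p - po‖ := by
    calc 2 / π ^ 2 * θ ^ 2 * ro < 2 / π ^ 2 * θ ^ 2 * ‖p - po‖ := by gcongr
      _ ≤ (1 - cos θ) * ‖p - po‖ := by gcongr; linarith
  linear_combination mul_lt_mul_of_pos_left key hw

end Vs

theorem statement_7_general
    (po pd : E2) (ro ε ϱ rs γθ γs : ℝ)
    (hro : 0 < ro) (hε : 0 < ε) (hϱ : 0 < ϱ)
    (hrs_ub : rs < dO po ro pd)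
    (Θ : Finset ℝ) (hne : Θ.Nonempty) (hΘ : ∀ t ∈ Θ, 0 < |t| ∧ |t| < π)
    (θM δstar cκ : ℝ)
    (hθM : θM = Θ.sup' hne fun t => |t|)
    (hδ : δstar = (2 * ro * ‖pd - po‖ / π ^ 2 - γθ / 2) * θM ^ 2)
    (hc : cκ = (1 - Real.cos θM) * ‖pd - po‖ ^ 2)
    (hγs : γs < δstar / cκ)
    (p : E2) (hp : p ∈ Xp po ro ε) (hppd : p ≠ pd)
    (hcrit : p - pd + ((ϱ * phi' rs (dO po ro p)) / ‖p - po‖) • (p - po) = 0) :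
    δstar - γs * cκ <
      (Vnav2 po pd ro ϱ rs γθ p 0 + (γs / 2) * ‖(0 : E2) - sigmaFn po pd 0‖ ^ 2)
        - Θ.inf' hne
            (fun t => Vnav2 po pd ro ϱ rs γθ p t + (γs / 2) * ‖(0 : E2) - sigmaFn po pd t‖ ^ 2)
      ∧ 0 < δstar - γs * cκ := by
  have hn : ro < ‖p - po‖ := by linarith [show ro + ε ≤ ‖p - po‖ from hp]
  obtain ⟨μ, hμ, hμpd⟩ :=
    exists_neg_smul_of_gradVnav_eq_zero hϱ hrs_ub (by rw [dO]; linarith) hppd hcrit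
  have hw : 0 < ‖pd - po‖ := by
    rw [norm_sub_eq_neg_mul_norm hμ.le hμpd]
    exact mul_pos (neg_pos.mpr hμ) (hro.trans hn)
  obtain ⟨t, ht, hsup⟩ := Θ.exists_mem_eq_sup' hne fun t => |t|
  rw [hsup] at hθM
  obtain ⟨ht₀, htπ⟩ := hΘ t ht
  have hgap := lt_Vs_zero_sub_Vs_of_sub_eq_smul (γθ := γθ) (γs := γs) (ϱ := ϱ) (rs := rs)
    hn hμ.le hμpd hw (abs_pos.mp ht₀) htπ.le
  rw [← cos_abs, ← sq_abs t, ← hθM, ← hc, ← hδ] at hgap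
  have hcκ : 0 < cκ := by
    rw [hc, hθM]
    have hθMπ : |(|t|)| ≤ π := by rw [abs_abs]; exact htπ.le
    exact mul_pos (one_sub_cos_pos_of_abs_le_pi ht₀.ne' hθMπ) (pow_pos hw 2)
  refine ⟨?_, by linarith [(lt_div_iff₀ hcκ).mp hγs]⟩
  calc δstar - γs * cκ < Vs po pd ro ϱ rs γθ γs p 0 0 - Vs po pd ro ϱ rs γθ γs p 0 t := hgap
    _ ≤ Vs po pd ro ϱ rs γθ γs p 0 0 - Θ.inf' hne (Vs po pd ro ϱ rs γθ γs p 0) :=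
      sub_le_sub_left (Θ.inf'_le _ ht) _

/-- With `δ* = (2 r_o ‖p_d - p_o‖/π² - γ_θ/2) θ̄_M²`,
`c_κ = (1 - cos θ̄_M) ‖p_d - p_o‖²`, and `0 < γ_s < δ*/c_κ`, for every undesired critical point
`p ≠ p_d` of `V_nav` in `X_p` one has
`V_s(p,0,0) - min_{θ̄∈Θ} V_s(p,0,θ̄) > δ* - γ_s c_κ > 0`, where
`V_s(p,η,θ) = 𝒱_nav(p,θ) + (γ_s/2)‖η - σ(θ)‖²`. -/
theorem statement_7
    (po pd : E2) (ro ε ϱ rs γθ γs : ℝ)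
    (hro : 0 < ro) (hε : 0 < ε) (hϱ : 0 < ϱ)
    (hpd : pd ∈ Xp po ro ε) (hrs_lb : ε < rs) (hrs_ub : rs < dO po ro pd)
    (Θ : Finset ℝ) (hne : Θ.Nonempty) (hΘ : ∀ t ∈ Θ, 0 < |t| ∧ |t| < π)
    (hγθ₀ : 0 < γθ) (hγθ : γθ < 4 * ro * ‖pd - po‖ / π ^ 2)
    (θM δstar cκ : ℝ)
    (hθM : θM = Θ.sup' hne fun t => |t|)
    (hδ : δstar = (2 * ro * ‖pd - po‖ / π ^ 2 - γθ / 2) * θM ^ 2)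
    (hc : cκ = (1 - Real.cos θM) * ‖pd - po‖ ^ 2)
    (hγs₀ : 0 < γs) (hγs : γs < δstar / cκ)
    (p : E2) (hp : p ∈ Xp po ro ε) (hppd : p ≠ pd)
    (hcrit : p - pd + ((ϱ * phi' rs (dO po ro p)) / ‖p - po‖) • (p - po) = 0) :
    δstar - γs * cκ <
      (Vnav2 po pd ro ϱ rs γθ p 0 + (γs / 2) * ‖(0 : E2) - sigmaFn po pd 0‖ ^ 2)
        - Θ.inf' hne
            (fun t => Vnav2 po pd ro ϱ rs γθ p t + (γs / 2) * ‖(0 : E2) - sigmaFn po pd t‖ ^ 2)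
      ∧ 0 < δstar - γs * cκ :=
  statement_7_general po pd ro ε ϱ rs γθ γs hro hε hϱ hrs_ub Θ hne hΘ θM δstar cκ hθM hδ hc hγs p hp
    hppd hcrit
end
end

section
/- The modified navigation function 𝒱_nav is positive definite with respect to (p_d, 0) on X_p × ℝ: 𝒱_nav(p,θ) ≥ 0 for all p ∈ X_p and θ ∈ ℝ, and 𝒱_nav(p,θ) = 0 if and only if p = p_d and θ = 0. -/
open Real Filter
open scoped RealInnerProductSpace Topology Matrix

noncomputable section

lemma phi_nonneg {rs z : ℝ} (hrs : 0 < rs) (hz : 0 < z) : 0 ≤ phi rs z := by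
  unfold phi
  split
  · exact mul_nonneg (sq_nonneg _) (Real.log_nonneg ((one_le_div hz).mpr ‹_›))
  · exact le_refl 0

lemma Tmap_zero (po p : E2) : Tmap po p 0 = p := by
  have h1 : RotM 0 = 1 := by
    simp [RotM, Matrix.one_fin_two]
  simp [Tmap, h1, mulV, Matrix.one_mulVec, toE2, fromE2]

/-- `𝒱_nav` is positive definite with respect to `(p_d, 0)` on `X_p × ℝ`:
it is nonnegative, and vanishes exactly at `p = p_d`, `θ = 0`. -/
theorem statement_11 (po pd : E2) (ro ε ϱ rs γθ : ℝ)
    (hro : 0 < ro) (hε : 0 < ε) (hϱ : 0 < ϱ) (hγθ : 0 < γθ)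
    (hpd : pd ∈ Xp po ro ε) (hrs_lb : ε < rs) (hrs_ub : rs < dO po ro pd) :
    (∀ p ∈ Xp po ro ε, ∀ θ : ℝ, 0 ≤ Vnav2 po pd ro ϱ rs γθ p θ) ∧
      (∀ p ∈ Xp po ro ε, ∀ θ : ℝ,
        (Vnav2 po pd ro ϱ rs γθ p θ = 0 ↔ p = pd ∧ θ = 0)) := by
  have hrs0 : (0:ℝ) < rs := hε.trans hrs_lb
  have hdpos : ∀ p ∈ Xp po ro ε, 0 < dO po ro p := by
    intro p hp
    have : ro + ε ≤ ‖p - po‖ := hp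
    simp only [dO]
    linarith
  have hA : ∀ p θ, 0 ≤ (1 / 2 : ℝ) * ‖Tmap po p θ - pd‖ ^ 2 := by
    intro p θ; positivity
  have hB : ∀ p ∈ Xp po ro ε, 0 ≤ ϱ * phi rs (dO po ro p) := by
    intro p hp
    exact mul_nonneg hϱ.le (phi_nonneg hrs0 (hdpos p hp))
  have hC : ∀ θ : ℝ, 0 ≤ (γθ / 2) * θ ^ 2 := by intro θ; positivity
  constructor
  · intro p hp θ
    have := hA p θ; have := hB p hp; have := hC θ
    unfold Vnav2; linarith
  · intro p hp θ
    constructor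
    · intro h0
      have hA' := hA p θ; have hB' := hB p hp; have hC' := hC θ
      unfold Vnav2 at h0
      have hCz : (γθ / 2) * θ ^ 2 = 0 := by linarith
      have hθ : θ = 0 := by
        by_contra hne
        have : 0 < (γθ / 2) * θ ^ 2 := by positivity
        linarith
      subst hθ
      have hAz : (1 / 2 : ℝ) * ‖Tmap po p 0 - pd‖ ^ 2 = 0 := by linarith
      have : ‖Tmap po p 0 - pd‖ = 0 := by
        nlinarith [norm_nonneg (Tmap po p 0 - pd)]
      have hT : Tmap po p 0 = pd := by
        have := norm_eq_zero.mp this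
        exact sub_eq_zero.mp this
      rw [Tmap_zero] at hT
      exact ⟨hT, rfl⟩
    · rintro ⟨rfl, rfl⟩
      have hphi : phi rs (dO po ro p) = 0 := by
        unfold phi
        rw [if_neg (not_le.mpr hrs_ub)]
      simp [Vnav2, Tmap_zero, hphi]
end
end

section
/- Suppose p ∈ X_p with p ≠ p_d satisfies the critical-point equation p − p_d + ϱ·φ'(d_o(p))·(p − p_o)/‖p − p_o‖ = 0. Then d_o(p) < r_s, and there exists a scalar c > 1 with p − p_d = c·(p − p_o); consequently ⟨p − p_o, p_o − p_d⟩ = ‖p − p_o‖·‖p_o − p_d‖ and ‖p − p_d‖ = ‖p − p_o‖ + ‖p_o − p_d‖ (the critical point lies on the line through p_o and p_d, on the side of the obstacle opposite to the destination). -/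
open Real Filter
open scoped RealInnerProductSpace Topology Matrix

noncomputable section

/-- If `p ∈ X_p`, `p ≠ p_d`, satisfies the critical-point equation
`p - p_d + ϱ φ'(d_o(p)) (p - p_o)/‖p - p_o‖ = 0`, then `d_o(p) < r_s`, there is `c > 1` with
`p - p_d = c (p - p_o)`, and consequently `⟨p - p_o, p_o - p_d⟩ = ‖p - p_o‖ ‖p_o - p_d‖` and
`‖p - p_d‖ = ‖p - p_o‖ + ‖p_o - p_d‖`. -/
theorem statement_13 (po pd : E2) (ro ε ϱ rs : ℝ)
    (hro : 0 < ro) (hε : 0 < ε) (hϱ : 0 < ϱ)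
    (hpd : pd ∈ Xp po ro ε) (hrs_lb : ε < rs) (hrs_ub : rs < dO po ro pd)
    (p : E2) (hp : p ∈ Xp po ro ε) (hppd : p ≠ pd)
    (hcrit : p - pd + ((ϱ * phi' rs (dO po ro p)) / ‖p - po‖) • (p - po) = 0) :
    dO po ro p < rs ∧
      (∃ c : ℝ, 1 < c ∧ p - pd = c • (p - po)) ∧
      ⟪p - po, po - pd⟫ = ‖p - po‖ * ‖po - pd‖ ∧
      ‖p - pd‖ = ‖p - po‖ + ‖po - pd‖ := by
  have hp' : ro + ε ≤ ‖p - po‖ := hp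
  have hnpo : (0:ℝ) < ‖p - po‖ := lt_of_lt_of_le (by linarith) hp'
  have hzpos : 0 < dO po ro p := by unfold dO; linarith
  have hlt : dO po ro p < rs := by
    by_contra h
    push_neg at h
    have hphi : phi' rs (dO po ro p) = 0 := by
      unfold phi'
      split_ifs with h'
      · have : dO po ro p = rs := le_antisymm h' h
        simp [this]
      · rfl
    rw [hphi] at hcrit
    simp at hcrit
    exact hppd (sub_eq_zero.mp hcrit)
  have hphi_neg : phi' rs (dO po ro p) < 0 := by
    unfold phi'
    rw [if_pos hlt.le]
    have hl : 0 < Real.log (rs / dO po ro p) :=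
      Real.log_pos (by rw [lt_div_iff₀ hzpos]; linarith)
    have h1 : 2 * (dO po ro p - rs) * Real.log (rs / dO po ro p) < 0 :=
      mul_neg_of_neg_of_pos (by linarith) hl
    have h2 : 0 < (dO po ro p - rs) ^ 2 / dO po ro p :=
      div_pos (pow_two_pos_of_ne_zero (by linarith)) hzpos
    linarith
  set c : ℝ := -(ϱ * phi' rs (dO po ro p) / ‖p - po‖) with hcdef
  have hcpos : 0 < c := by
    have : ϱ * phi' rs (dO po ro p) / ‖p - po‖ < 0 :=
      div_neg_of_neg_of_pos (mul_neg_of_pos_of_neg hϱ hphi_neg) hnpo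
    simpa [hcdef] using neg_pos.mpr this
  have heq : p - pd = c • (p - po) := by
    have h := eq_neg_of_add_eq_zero_left hcrit
    rw [h, ← neg_smul]
  have hpdpo : pd - po = (1 - c) • (p - po) := by
    have h : pd - po = (p - po) - (p - pd) := by abel
    rw [h, heq, sub_smul, one_smul]
  have hgt : ‖p - po‖ < ‖pd - po‖ := by
    have h1 : rs < ‖pd - po‖ - ro := hrs_ub
    have h2 : ‖p - po‖ - ro < rs := hlt
    linarith
  have habs : 1 < |1 - c| := by
    have h1 : ‖pd - po‖ = |1 - c| * ‖p - po‖ := by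
      rw [hpdpo, norm_smul, Real.norm_eq_abs]
    nlinarith [abs_nonneg (1 - c)]
  have hc2 : 2 < c := by
    rcases abs_cases (1 - c) with ⟨he, _⟩ | ⟨he, _⟩ <;> rw [he] at habs <;> linarith
  have hpopd : po - pd = (c - 1) • (p - po) := by
    have h : po - pd = -(pd - po) := by abel
    rw [h, hpdpo, ← neg_smul]
    ring_nf
  have hnorm_popd : ‖po - pd‖ = (c - 1) * ‖p - po‖ := by
    rw [hpopd, norm_smul, Real.norm_eq_abs, abs_of_pos (by linarith)]
  refine ⟨hlt, ⟨c, by linarith, heq⟩, ?_, ?_⟩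
  · rw [hnorm_popd, hpopd, real_inner_smul_right, real_inner_self_eq_norm_sq]
    ring
  · rw [heq, norm_smul, Real.norm_eq_abs, abs_of_pos (by linarith), hnorm_popd]
    ring
end
end
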